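/- arXiv:1601.06437 — 6 statements merged into one kernel-verified Lean document; each statement's English description precedes it below -/
import Mathlib

section
/- Let p, q be natural numbers with q > 0. Partition the integers 1, 2, ..., p into consecutive blocks of size q (block i consisting of the integers k with (i−1)·q < k ≤ i·q, so the block index of k is ⌈k/q⌉). Then the number of integers k with 1 ≤ k ≤ p whose block index ⌈k/q⌉ is odd equals φ₂(p,q). -/
/-- `l(p,q) = ⌊p/q⌋` for `q > 0`, and `l(p,0) = 0` (this agrees with `Nat` division). -/
def lfun (p q : ℕ) : ℕ := p / q

/-- `φ₁(p,q) = l·q/2` if `l = l(p,q)` is even, and `p − (l+1)·q/2` if `l` is odd. -/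
def phi1 (p q : ℕ) : ℕ :=
  if Even (lfun p q) then lfun p q * q / 2 else p - (lfun p q + 1) * q / 2

/-- `φ₂(p,q) = (l+1)·q/2` if `l = l(p,q)` is odd, and `p − l·q/2` if `l` is even. -/
def phi2 (p q : ℕ) : ℕ :=
  if Odd (lfun p q) then (lfun p q + 1) * q / 2 else p - lfun p q * q / 2

lemma phi2_eq (p q : ℕ) :
    phi2 p q = if Even (p / q) then (p / q) / 2 * q + p % q else (p / q + 1) / 2 * q := by
  unfold phi2 lfun
  have hmod := Nat.div_add_mod p q
  rcases Nat.even_or_odd (p / q) with he | ho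
  · obtain ⟨m, hm⟩ := he
    rw [if_neg (by simp [Nat.not_odd_iff_even.mpr ⟨m, hm⟩]), if_pos ⟨m, hm⟩, hm]
    have h1 : (m + m) * q / 2 = m * q := by
      rw [show (m + m) * q = 2 * (m * q) by ring, Nat.mul_div_cancel_left _ (by norm_num)]
    have h2 : (m + m) / 2 = m := by omega
    rw [h1, h2]
    rw [hm] at hmod
    have h3 : q * (m + m) = m * q + m * q := by ring
    omega
  · obtain ⟨m, hm⟩ := ho
    rw [if_pos ⟨m, hm⟩, if_neg (by simp [Nat.not_even_iff_odd.mpr ⟨m, hm⟩]), hm]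
    have h1 : (2 * m + 1 + 1) * q / 2 = (m + 1) * q := by
      rw [show (2 * m + 1 + 1) * q = 2 * ((m + 1) * q) by ring,
        Nat.mul_div_cancel_left _ (by norm_num)]
    have h2 : (2 * m + 1 + 1) / 2 = m + 1 := by omega
    rw [h1, h2]

/-- For `q > 0`, the number of `k ∈ {1,…,p}` whose block index `⌈k/q⌉` is odd
equals `φ₂(p,q)`. -/
theorem count_odd_blocks_eq_phi2 (p q : ℕ) (hq : 0 < q) :
    ((Finset.Icc 1 p).filter (fun k => Odd ((k + q - 1) / q))).card = phi2 p q := by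
  induction p with
  | zero => simp [phi2, lfun]
  | succ p ih =>
    have hIcc : Finset.Icc 1 (p + 1) = insert (p + 1) (Finset.Icc 1 p) := by
      exact (Finset.insert_Icc_right_eq_Icc_add_one (by omega)).symm
    have hnot : (p + 1) ∉ Finset.Icc 1 p := by simp
    rw [hIcc, Finset.filter_insert]
    have hdiv : (p + 1 + q - 1) / q = p / q + 1 := by
      rw [show p + 1 + q - 1 = p + q by omega, Nat.add_div_right _ hq]
    have hmod := Nat.div_add_mod p q
    have hmodlt : p % q < q := Nat.mod_lt _ hq
    rcases Nat.even_or_odd (p / q) with he | ho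
    · -- the new element is in an odd block
      rw [if_pos (by rw [hdiv]; exact Even.add_one he),
        Finset.card_insert_of_notMem (by simp), ih]
      rw [phi2_eq, phi2_eq, if_pos he]
      by_cases hr : p % q + 1 < q
      · have hd : (p + 1) / q = p / q := by
          rw [show p + 1 = (p % q + 1) + p / q * q by
            have : p / q * q = q * (p / q) := by ring
            omega,
            Nat.add_mul_div_right _ _ hq, Nat.div_eq_of_lt hr]
          omega
        have hm : (p + 1) % q = p % q + 1 := by
          have := Nat.div_add_mod (p + 1) q
          rw [hd] at this
          omega
        rw [hd, if_pos he, hm]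
        omega
      · have hd : (p + 1) / q = p / q + 1 := by
          rw [show p + 1 = 0 + (p / q + 1) * q by
            have : (p / q + 1) * q = q * (p / q) + q := by ring
            omega,
            Nat.add_mul_div_right _ _ hq]
          simp
        rw [hd, if_neg (by simpa using Even.add_one he)]
        obtain ⟨m, hm⟩ := he
        have h1 : (m + m) / 2 = m := by omega
        have h2 : (m + m + 1 + 1) / 2 = m + 1 := by omega
        rw [hm, h1, h2, Nat.succ_mul]
        omega
    · -- the new element is in an even block
      rw [if_neg (by rw [hdiv]; simpa using Odd.add_one ho), ih]
      rw [phi2_eq, phi2_eq, if_neg (Nat.not_even_iff_odd.mpr ho)]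
      by_cases hr : p % q + 1 < q
      · have hd : (p + 1) / q = p / q := by
          rw [show p + 1 = (p % q + 1) + p / q * q by
            have : p / q * q = q * (p / q) := by ring
            omega,
            Nat.add_mul_div_right _ _ hq, Nat.div_eq_of_lt hr]
          omega
        rw [hd, if_neg (Nat.not_even_iff_odd.mpr ho)]
      · have hd : (p + 1) / q = p / q + 1 := by
          rw [show p + 1 = 0 + (p / q + 1) * q by
            have : (p / q + 1) * q = q * (p / q) + q := by ring
            omega,
            Nat.add_mul_div_right _ _ hq]
          simp
        have hm0 : (p + 1) % q = 0 := by
          rw [show p + 1 = (p / q + 1) * q by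
            have : (p / q + 1) * q = q * (p / q) + q := by ring
            omega]
          exact Nat.mul_mod_left _ _
        rw [hd, if_pos (Odd.add_one ho), hm0]
        obtain ⟨m, hm⟩ := ho
        have h1 : (2 * m + 1 + 1) / 2 = m + 1 := by omega
        have h2 : (2 * m + 1 + 1) / 2 = m + 1 := by omega
        rw [hm, h1]
        omega
end

section
/- Let n11, n21, n2 be natural numbers with n11 ≠ n21. Set Δ = |n11 − n21|, rᵖ = (n11 − n2)⁺, n^c = n11 − rᵖ, and define r^c = φ₁(n^c, Δ) if n11 > n2 and n11 > n21, and r^c = φ₂(n^c, Δ) otherwise. Then 2·(rᵖ + r^c) ≤ rᵖ + max(n11, n21) + (n2 − n21)⁺; that is, the achievable secrecy rate rᵖ + r^c of the linear deterministic scheme never exceeds the converse bound r_ub1 = (n11−n2)⁺ + (max(n11,n21) − (n11−n2)⁺)/2 + (n2−n21)⁺/2. -/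
lemma phi1_le (p q : ℕ) (hq : 0 < q) : 2 * phi1 p q ≤ p := by
  have h1 : p / q * q ≤ p := Nat.div_mul_le_self p q
  have h2 : p < (p / q + 1) * q := by have := Nat.lt_div_mul_add (a := p) hq; nlinarith [this]
  unfold phi1 lfun
  split
  · rename_i h
    obtain ⟨k, hk⟩ := h
    rw [hk] at h1 ⊢
    have : (k + k) * q = 2 * (k * q) := by ring
    rw [this, Nat.mul_div_cancel_left _ (by norm_num)]
    omega
  · rename_i h
    obtain ⟨k, hk⟩ := Nat.not_even_iff_odd.mp h
    rw [hk] at h2 ⊢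
    have : (2 * k + 1 + 1) * q = 2 * ((k + 1) * q) := by ring
    rw [this, Nat.mul_div_cancel_left _ (by norm_num)]
    omega

lemma phi2_le (p q : ℕ) (hq : 0 < q) : 2 * phi2 p q ≤ p + q := by
  have h1 : p / q * q ≤ p := Nat.div_mul_le_self p q
  have h2 : p < (p / q + 1) * q := by have := Nat.lt_div_mul_add (a := p) hq; nlinarith [this]
  unfold phi2 lfun
  split
  · rename_i h
    obtain ⟨k, hk⟩ := h
    rw [hk] at h1 ⊢
    have : (2 * k + 1 + 1) * q = 2 * ((k + 1) * q) := by ring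
    rw [this, Nat.mul_div_cancel_left _ (by norm_num)]
    have h3 : (2 * k + 1) * q = 2 * (k * q) + q := by ring
    rw [h3] at h1
    have h5 : (k + 1) * q = k * q + q := by ring
    rw [h5]
    omega
  · rename_i h
    obtain ⟨k, hk⟩ := Nat.not_odd_iff_even.mp h
    rw [hk] at h1 h2 ⊢
    have : (k + k) * q = 2 * (k * q) := by ring
    have h4 : (k + k + 1) * q = 2 * (k * q) + q := by ring
    rw [this, Nat.mul_div_cancel_left _ (by norm_num)]
    rw [h4] at h2
    omega

/-- The achievable rate `rᵖ + r^c` of the deterministic scheme never exceeds the converse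
bound `r_ub1`: `2·(rᵖ + r^c) ≤ rᵖ + max(n11, n21) + (n2 − n21)⁺`, where `Δ = |n11 − n21|`,
`rᵖ = (n11 − n2)⁺`, `n^c = n11 − rᵖ`, and `r^c = φ₁(n^c, Δ)` if `n11 > n2` and `n11 > n21`,
`r^c = φ₂(n^c, Δ)` otherwise. -/
theorem achievable_le_rub1 (n11 n21 n2 : ℕ) (hne : n11 ≠ n21) :
    2 * ((n11 - n2) +
        (if n2 < n11 ∧ n21 < n11
          then phi1 (n11 - (n11 - n2)) (max n11 n21 - min n11 n21)
          else phi2 (n11 - (n11 - n2)) (max n11 n21 - min n11 n21)))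
      ≤ (n11 - n2) + max n11 n21 + (n2 - n21) := by
  by_cases hc : n2 < n11 ∧ n21 < n11
  · rw [if_pos hc]
    have e1 : n11 - (n11 - n2) = n2 := by omega
    have e2 : max n11 n21 - min n11 n21 = n11 - n21 := by omega
    rw [e1, e2]
    have := phi1_le n2 (n11 - n21) (by omega)
    omega
  · rw [if_neg hc]
    have e1 : n11 - (n11 - n2) = min n11 n2 := by omega
    rw [e1]
    have := phi2_le (min n11 n2) (max n11 n21 - min n11 n21) (by omega)
    omega
end

section
/- Let n11, n21, n2 be natural numbers with n2 = n11 and 3·n21 ≤ 2·n11. Then 2·max(n11 − n21, n21) = min(R1, R2, R3), i.e. in the regime n21/n11 ≤ 2/3 with symmetric eavesdropper gains n2 = n11 the achievable secrecy rate max(n11 − n21, n21) of the linear deterministic wiretap channel with a helper exactly equals the minimum of the three converse bounds. -/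
/-- Twice the first converse bound: `2·(n11−n2)⁺ + (max(n11,n21) − (n11−n2)⁺) + (n2−n21)⁺`
(truncated subtraction on `ℕ` realizes the positive part `x⁺`). -/
def Rub1 (n11 n21 n2 : ℕ) : ℕ :=
  2 * (n11 - n2) + (max n11 n21 - (n11 - n2)) + (n2 - n21)

/-- Twice the second converse bound: `2·n11`. -/
def Rub2 (n11 : ℕ) : ℕ := 2 * n11

/-- Twice the third converse bound:
`2·n21 + 2·(n11−n21−n2)⁺ + 2·((n2−n21−(n2−n11+n21)⁺)⁺)`
(truncated subtraction on `ℕ` realizes the positive parts). -/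
def Rub3 (n11 n21 n2 : ℕ) : ℕ :=
  2 * n21 + 2 * (n11 - n21 - n2) + 2 * (n2 - n21 - (n2 + n21 - n11))

/-- For `n2 = n11` and `3·n21 ≤ 2·n11`, twice the achievable rate `max(n11 − n21, n21)`
equals the minimum of the three (doubled) converse bounds. -/
theorem achievable_eq_converse_low (n11 n21 n2 : ℕ) (h2 : n2 = n11)
    (hreg : 3 * n21 ≤ 2 * n11) :
    2 * max (n11 - n21) n21 = min (Rub1 n11 n21 n2) (min (Rub2 n11) (Rub3 n11 n21 n2)) := by
  subst h2
  simp only [Rub1, Rub2, Rub3]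
  omega
end

section
/- Let n11, n21, n2 be natural numbers with n2 = n11 and n21 ≠ n11. Then min(R1, R2, R3) ≤ 2·φ₂(n11, |n11 − n21|) + |n11 − n21|; that is, the achievable secrecy rate φ₂(n11, Δ) of the linear deterministic scheme is within Δ/2 of the minimum of the three converse bounds, where Δ = |n11 − n21|. -/
lemma le_two_phi2 (p q : ℕ) : p ≤ 2 * phi2 p q := by
  unfold phi2 lfun
  rcases eq_or_ne q 0 with hq | hq
  · simp [hq]; omega
  split_ifs with h
  · obtain ⟨k, hk⟩ := h
    have h1 : (p / q + 1) * q = 2 * ((p / q + 1) * q / 2) := by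
      rw [Nat.mul_div_cancel']
      exact Dvd.dvd.mul_right ⟨k + 1, by omega⟩ q
    have h2 : p < (p / q + 1) * q :=
      (Nat.div_lt_iff_lt_mul (Nat.pos_of_ne_zero hq)).mp (Nat.lt_succ_self _)
    omega
  · obtain ⟨k, hk⟩ := Nat.not_odd_iff_even.mp h
    have h1 : p / q * q = 2 * (p / q * q / 2) := by
      rw [Nat.mul_div_cancel']
      exact Dvd.dvd.mul_right ⟨k, by omega⟩ q
    have h2 : p / q * q ≤ p := Nat.div_mul_le_self p q
    omega

/-- For `n2 = n11` and `n21 ≠ n11`, the minimum of the three (doubled) converse bounds is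
within `Δ = |n11 − n21|` of twice the achievable rate `φ₂(n11, Δ)`. -/
theorem converse_within_delta (n11 n21 n2 : ℕ) (h2 : n2 = n11) (hne : n21 ≠ n11) :
    min (Rub1 n11 n21 n2) (min (Rub2 n11) (Rub3 n11 n21 n2))
      ≤ 2 * phi2 n11 (max n11 n21 - min n11 n21) + (max n11 n21 - min n11 n21) := by
  have key := le_two_phi2 n11 (max n11 n21 - min n11 n21)
  have h1 : min (Rub1 n11 n21 n2) (min (Rub2 n11) (Rub3 n11 n21 n2)) ≤ Rub1 n11 n21 n2 :=
    min_le_left _ _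
  have h3 : Rub1 n11 n21 n2 ≤ n11 + (max n11 n21 - min n11 n21) := by
    simp only [Rub1, h2]
    omega
  omega
end

section
/- Let n11, n21, n2 be natural numbers with 3·n21 ≤ 2·n11. Then 2·max(n11 − n21, max(n21, (n11 − n2)⁺)) ≤ min(R1, R2, R3); that is, in the regime n21/n11 ≤ 2/3 the achievable secrecy rate max(n11 − n21, n21, rᵖ) of the linear deterministic wiretap channel with a helper, with private-part rate rᵖ = (n11 − n2)⁺, never exceeds any of the three converse bounds, for arbitrary eavesdropper gain n2. -/
/-- For `3·n21 ≤ 2·n11` and arbitrary `n2`, twice the achievable rate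
`max(n11 − n21, n21, (n11 − n2)⁺)` never exceeds the minimum of the three (doubled)
converse bounds. -/
theorem achievable_le_converse_low (n11 n21 n2 : ℕ) (hreg : 3 * n21 ≤ 2 * n11) :
    2 * max (n11 - n21) (max n21 (n11 - n2))
      ≤ min (Rub1 n11 n21 n2) (min (Rub2 n11) (Rub3 n11 n21 n2)) := by
  simp only [Rub1, Rub2, Rub3]
  omega
end

section
/- Let n11, n21, n2 be natural numbers with n2 = n11, 2·n11 ≤ 3·n21, n21 ≤ 2·n11 and n21 ≠ n11. Then 2·φ₂(n11, |n11 − n21|) ≤ min(R1, R2, R3); that is, in the regime 2/3 ≤ n21/n11 ≤ 2 with symmetric eavesdropper gains n2 = n11 the achievable secrecy rate φ₂(n11, Δ) of the linear deterministic scheme never exceeds any of the three converse bounds, where Δ = |n11 − n21|. -/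
lemma phi2_key (p q : ℕ) (hq : 0 < q) :
    2 * phi2 p q ≤ p + q ∧ 2 * phi2 p q ≤ 2 * p ∧
      (3 * q ≤ p → 2 * phi2 p q ≤ 2 * (p - q)) := by
  have hl : q * (p / q) + p % q = p := Nat.div_add_mod p q
  have hr : p % q < q := Nat.mod_lt p hq
  unfold phi2 lfun
  by_cases hodd : Odd (p / q)
  · rw [if_pos hodd]
    obtain ⟨k, hk⟩ := hodd
    have h1 : (p / q + 1) * q / 2 = k * q + q := by
      rw [hk]
      have : (2 * k + 1 + 1) * q = 2 * (k * q + q) := by ring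
      rw [this, Nat.mul_div_cancel_left _ (by norm_num)]
    have hp : p = 2 * (k * q) + q + p % q := by
      rw [hk] at hl
      have : q * (2 * k + 1) = 2 * (k * q) + q := by ring
      omega
    rw [h1]
    omega
  · rw [if_neg hodd]
    rw [Nat.not_odd_iff_even] at hodd
    obtain ⟨k, hk⟩ := hodd
    have h1 : p / q * q / 2 = k * q := by
      rw [hk]
      have : (k + k) * q = 2 * (k * q) := by ring
      rw [this, Nat.mul_div_cancel_left _ (by norm_num)]
    have hp : p = 2 * (k * q) + p % q := by
      rw [hk] at hl
      have : q * (k + k) = 2 * (k * q) := by ring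
      omega
    rw [h1]
    omega

/-- For `n2 = n11`, `2/3 ≤ n21/n11 ≤ 2` and `n21 ≠ n11`, twice the achievable rate
`φ₂(n11, Δ)` with `Δ = |n11 − n21|` never exceeds the minimum of the three (doubled)
converse bounds. -/
theorem achievable_le_converse_mid (n11 n21 n2 : ℕ) (h2 : n2 = n11)
    (hlo : 2 * n11 ≤ 3 * n21) (hhi : n21 ≤ 2 * n11) (hne : n21 ≠ n11) :
    2 * phi2 n11 (max n11 n21 - min n11 n21)
      ≤ min (Rub1 n11 n21 n2) (min (Rub2 n11) (Rub3 n11 n21 n2)) := by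
  have hq : 0 < max n11 n21 - min n11 n21 := by omega
  obtain ⟨A, B, C⟩ := phi2_key n11 (max n11 n21 - min n11 n21) hq
  unfold Rub1 Rub2 Rub3
  rcases lt_or_gt_of_ne hne with h | h
  · -- n21 < n11
    have hC := C (by omega)
    omega
  · -- n11 < n21
    omega
end
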